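/- Let g, N, T₀, p₀, c_p, R_d be positive real constants and set H = g/N², α = gH/(c_p T₀). Define the environmental temperature T̃(z) = T₀(α − (α−1)e^{z/H}), pressure p̃(z) = p₀ exp((c_p/R_d)(ln(T̃(z)/T₀) − z/H)), and density ρ̃(z) = p̃(z)/(R_d T̃(z)). Then at every z with T̃(z) > 0 the atmosphere is in hydrostatic balance: p̃ is differentiable at z and p̃′(z) = −ρ̃(z) g. -/

import Mathlib

/-!
With κ = c_p/R_d, the logarithmic derivative of p̃ is κ(T̃′/T̃ − 1/H), so the balance
p̃′ = −p̃ g/(R_d T̃) amounts to the lapse-rate equation T̃′ = T̃/H − g/c_p. The profile T̃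
satisfies it because T̃′ = (T̃ − T₀α)/H and T₀α/H = g/c_p.
-/

open Real

theorem hasDerivAt_log_div_const {f : ℝ → ℝ} {f' x : ℝ} (c : ℝ) (hf : HasDerivAt f f' x)
    (hfx : f x ≠ 0) (hc : c ≠ 0) :
    HasDerivAt (fun y => log (f y / c)) (f' / f x) x :=
  ((hf.div_const c).log (div_ne_zero hfx hc)).congr_deriv (by field_simp)

theorem hasDerivAt_const_sub_mul_exp_div (T₀ α H z : ℝ) :
    HasDerivAt (fun z => T₀ * (α - (α - 1) * exp (z / H)))
      (T₀ * (α - (α - 1) * exp (z / H)) / H - T₀ * α / H) z :=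
  ((((hasDerivAt_id z).div_const H).exp.const_mul (α - 1)).const_sub α).const_mul T₀
    |>.congr_deriv (by rw [id]; ring)

theorem hasDerivAt_const_mul_exp_mul_log_div_sub {T : ℝ → ℝ} {T' z : ℝ} (p₀ T₀ κ H : ℝ)
    (hT : HasDerivAt T T' z) (hTz : T z ≠ 0) (hT₀ : T₀ ≠ 0) :
    HasDerivAt (fun z => p₀ * exp (κ * (log (T z / T₀) - z / H)))
      (p₀ * exp (κ * (log (T z / T₀) - z / H)) * (κ * (T' / T z - 1 / H))) z := by
  have hexponent : HasDerivAt (fun z => κ * (log (T z / T₀) - z / H))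
      (κ * (T' / T z - 1 / H)) z :=
    ((hasDerivAt_log_div_const T₀ hT hTz hT₀).sub ((hasDerivAt_id z).div_const H)).const_mul κ
  exact (hexponent.exp.const_mul p₀).congr_deriv (mul_assoc ..).symm

theorem stmt_11_general (g N T₀ p₀ cp Rd : ℝ)
    (hg : 0 < g) (hN : 0 < N) (hT₀ : 0 < T₀)
    (hcp : 0 < cp)
    (H α : ℝ) (hH : H = g / N^2) (hα : α = g * H / (cp * T₀))
    (T p ρ : ℝ → ℝ)
    (hT : ∀ z, T z = T₀ * (α - (α - 1) * Real.exp (z / H)))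
    (hp : ∀ z, p z = p₀ * Real.exp ((cp / Rd) * (Real.log (T z / T₀) - z / H)))
    (hρ : ∀ z, ρ z = p z / (Rd * T z)) :
    ∀ z, 0 < T z → HasDerivAt p (-(ρ z) * g) z := by
  intro z hTz
  have hH₀ : H ≠ 0 := by rw [hH]; positivity
  have hT' : HasDerivAt T (T z / H - g / cp) z := by
    have hαT₀ : T₀ * α / H = g / cp := by rw [hα]; field_simp
    rw [funext hT, ← hαT₀]
    exact hasDerivAt_const_sub_mul_exp_div T₀ α H z
  rw [funext hp]
  refine (hasDerivAt_const_mul_exp_mul_log_div_sub p₀ T₀ (cp / Rd) H hT' hTz.ne'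
    hT₀.ne').congr_deriv ?_
  rw [hρ, ← hp]
  field_simp
  ring

/-- The environmental atmosphere of the inertia gravity test case, with constant
Brunt–Väisälä frequency, is in hydrostatic balance: p̃′(z) = −ρ̃(z) g wherever T̃(z) > 0. -/
theorem stmt_11 (g N T₀ p₀ cp Rd : ℝ)
    (hg : 0 < g) (hN : 0 < N) (hT₀ : 0 < T₀) (hp₀ : 0 < p₀)
    (hcp : 0 < cp) (hRd : 0 < Rd)
    (H α : ℝ) (hH : H = g / N^2) (hα : α = g * H / (cp * T₀))
    (T p ρ : ℝ → ℝ)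
    (hT : ∀ z, T z = T₀ * (α - (α - 1) * Real.exp (z / H)))
    (hp : ∀ z, p z = p₀ * Real.exp ((cp / Rd) * (Real.log (T z / T₀) - z / H)))
    (hρ : ∀ z, ρ z = p z / (Rd * T z)) :
    ∀ z, 0 < T z → HasDerivAt p (-(ρ z) * g) z :=
  stmt_11_general g N T₀ p₀ cp Rd hg hN hT₀ hcp H α hH hα T p ρ hT hp hρ
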